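/- arXiv:1112.3003 — 3 statements merged into one kernel-verified Lean document; each statement's English description precedes it below -/
import Mathlib

section
/- Subadditivity-type inequality for the geometric mean: for positive definite matrices A_1, ..., A_m, B_1, ..., B_m, one has ∑_{j=1}^m (A_j ♯ B_j) ≤ (∑_{j=1}^m A_j) ♯ (∑_{j=1}^m B_j) in the Loewner order. -/
open Matrix Finset
open scoped ComplexOrder

/-- Real power of a matrix via the spectral decomposition (junk value if not Hermitian). -/
noncomputable def mrpow {l : Type*} [Fintype l] [DecidableEq l] (A : Matrix l l ℂ) (r : ℝ) :
    Matrix l l ℂ :=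
  if hA : A.IsHermitian then
    (hA.eigenvectorUnitary : Matrix l l ℂ) *
      Matrix.diagonal (fun i => ((hA.eigenvalues i ^ r : ℝ) : ℂ)) *
      (star hA.eigenvectorUnitary : Matrix l l ℂ)
  else A

/-- Weighted matrix geometric mean `A ♯ₜ B = A^(1/2) (A^(-1/2) B A^(-1/2))^t A^(1/2)`. -/
noncomputable def wgmean {l : Type*} [Fintype l] [DecidableEq l] (A B : Matrix l l ℂ) (t : ℝ) :
    Matrix l l ℂ :=
  mrpow A (1/2) * mrpow (mrpow A (-(1/2)) * B * mrpow A (-(1/2))) t * mrpow A (1/2)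

/-- Loewner order: `A ≤ B` iff `B - A` is positive semidefinite. -/
def loewnerLE {l : Type*} [Fintype l] [DecidableEq l] (A B : Matrix l l ℂ) : Prop :=
  (B - A).PosSemidef

/-!
The sum is compared with the right-hand side through Ando's characterisation of `A ♯ B` as the
largest Hermitian `X` with `[[A, X], [X, B]] ≥ 0`, i.e. (Schur complement) with `X A⁻¹ X ≤ B`.
Maximality holds because conjugating by `A^(-1/2)` turns `X A⁻¹ X ≤ B` into `Y² ≤ D²` with
`D = (A^(-1/2) B A^(-1/2))^(1/2)`, and then `Y ≤ |Y| ≤ D` by operator monotonicity of the square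
root. Since `A ♯ B` solves the Riccati equation `X A⁻¹ X = B`, each block matrix
`[[A_j, A_j ♯ B_j], [A_j ♯ B_j, B_j]]` is positive; so is their sum, whose off-diagonal block
`∑ A_j ♯ B_j` is therefore below `(∑ A_j) ♯ (∑ B_j)`.
-/

namespace CFC

variable {A : Type*} [CStarAlgebra A] [PartialOrder A] [StarOrderedRing A]

theorem le_of_mul_self_le_mul_self {d y : A} (hd : 0 ≤ d) (hy : IsSelfAdjoint y)
    (h : y * y ≤ d * d) : y ≤ d :=
  calc y ≤ abs y := sub_nonneg.mp <| abs_sub_self y ▸ smul_nonneg zero_le_two (negPart_nonneg y)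
    _ = sqrt (y * y) := by rw [abs, hy.star_eq]
    _ ≤ sqrt (d * d) := sqrt_le_sqrt _ _ h
    _ = d := sqrt_mul_self d hd

theorem rpow_half_mul_self {a : A} (ha : 0 ≤ a) : a ^ (1 / 2 : ℝ) * a ^ (1 / 2 : ℝ) = a := by
  rw [← sqrt_eq_rpow, sqrt_mul_sqrt_self a]

theorem ringInverse_eq_rpow_neg_half_mul_self {a : A} (ha : IsStrictlyPositive a) :
    Ring.inverse a = a ^ (-(1 / 2) : ℝ) * a ^ (-(1 / 2) : ℝ) := by
  rw [inverse_eq_rpow_neg_one, ← rpow_add ha.isUnit]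
  norm_num

noncomputable def geomMean (a b : A) : A :=
  a ^ (1 / 2 : ℝ) * (a ^ (-(1 / 2) : ℝ) * b * a ^ (-(1 / 2) : ℝ)) ^ (1 / 2 : ℝ) * a ^ (1 / 2 : ℝ)

theorem geomMean_nonneg (a b : A) : 0 ≤ geomMean a b :=
  (IsSelfAdjoint.of_nonneg rpow_nonneg).conjugate_nonneg rpow_nonneg

theorem geomMean_mul_ringInverse_mul_geomMean {a b : A} (ha : IsStrictlyPositive a)
    (hb : 0 ≤ b) : geomMean a b * Ring.inverse a * geomMean a b = b := by
  rw [ringInverse_eq_rpow_neg_half_mul_self ha, geomMean]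
  set p := a ^ (1 / 2 : ℝ)
  set q := a ^ (-(1 / 2) : ℝ)
  have hpq : p * q = 1 := rpow_mul_rpow_neg _ ha
  have hqp : q * p = 1 := rpow_neg_mul_rpow _ ha
  have hr : (q * b * q) ^ (1 / 2 : ℝ) * (q * b * q) ^ (1 / 2 : ℝ) = q * b * q :=
    rpow_half_mul_self ((IsSelfAdjoint.of_nonneg rpow_nonneg).conjugate_nonneg hb)
  calc p * (q * b * q) ^ (1 / 2 : ℝ) * p * (q * q) * (p * (q * b * q) ^ (1 / 2 : ℝ) * p)
      = p * ((q * b * q) ^ (1 / 2 : ℝ) * (p * q) * (q * p) * (q * b * q) ^ (1 / 2 : ℝ)) * p := by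
        simp only [mul_assoc]
    _ = p * ((q * b * q) ^ (1 / 2 : ℝ) * (q * b * q) ^ (1 / 2 : ℝ)) * p := by
        rw [hpq, hqp, mul_one, mul_one]
    _ = (p * q) * b * (q * p) := by rw [hr]; simp only [mul_assoc]
    _ = b := by rw [hpq, hqp, one_mul, mul_one]

theorem le_geomMean {a b x : A} (ha : IsStrictlyPositive a) (hx : IsSelfAdjoint x)
    (h : x * Ring.inverse a * x ≤ b) : x ≤ geomMean a b := by
  have hb : 0 ≤ b := (hx.conjugate_nonneg (inverse_eq_rpow_neg_one ha ▸ rpow_nonneg)).trans h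
  rw [ringInverse_eq_rpow_neg_half_mul_self ha] at h
  rw [geomMean]
  set p := a ^ (1 / 2 : ℝ)
  set q := a ^ (-(1 / 2) : ℝ)
  have hpq : p * q = 1 := rpow_mul_rpow_neg _ ha
  have hqp : q * p = 1 := rpow_neg_mul_rpow _ ha
  have hp : IsSelfAdjoint p := .of_nonneg rpow_nonneg
  have hq : IsSelfAdjoint q := .of_nonneg rpow_nonneg
  have hsq : (q * x * q) * (q * x * q) ≤
      (q * b * q) ^ (1 / 2 : ℝ) * (q * b * q) ^ (1 / 2 : ℝ) := by
    rw [rpow_half_mul_self (hq.conjugate_nonneg hb)]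
    convert hq.conjugate_le_conjugate h using 1
    simp only [mul_assoc]
  calc x = (p * q) * x * (q * p) := by rw [hpq, hqp, one_mul, mul_one]
    _ = p * (q * x * q) * p := by simp only [mul_assoc]
    _ ≤ p * (q * b * q) ^ (1 / 2 : ℝ) * p := hp.conjugate_le_conjugate
        (le_of_mul_self_le_mul_self rpow_nonneg (hx.conjugate_self hq) hsq)

end CFC

theorem Matrix.fromBlocks_sum {ι α m n o p : Type*} [AddCommMonoid α] (s : Finset ι)
    (A : ι → Matrix m n α) (B : ι → Matrix m o α) (C : ι → Matrix p n α)
    (D : ι → Matrix p o α) :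
    fromBlocks (∑ i ∈ s, A i) (∑ i ∈ s, B i) (∑ i ∈ s, C i) (∑ i ∈ s, D i) =
      ∑ i ∈ s, fromBlocks (A i) (B i) (C i) (D i) := by
  ext (i | i) (j | j) <;> simp [Matrix.sum_apply]

open scoped MatrixOrder Matrix.Norms.L2Operator

section

variable {l : Type*} [Fintype l] [DecidableEq l]

theorem mrpow_eq_rpow {S : Matrix l l ℂ} (hS : S.PosSemidef) (r : ℝ) : mrpow S r = S ^ r := by
  rw [mrpow, dif_pos hS.1, CFC.rpow_eq_cfc_real hS.nonneg, hS.1.cfc_eq, IsHermitian.cfc,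
    Unitary.conjStarAlgAut_apply]
  rfl

theorem wgmean_half_eq_geomMean {S T : Matrix l l ℂ} (hS : S.PosSemidef) (hT : T.PosSemidef) :
    wgmean S T (1 / 2) = CFC.geomMean S T := by
  have hC : (S ^ (-(1 / 2) : ℝ) * T * S ^ (-(1 / 2) : ℝ)).PosSemidef :=
    (IsSelfAdjoint.of_nonneg CFC.rpow_nonneg).conjugate_nonneg hT.nonneg |>.posSemidef
  rw [wgmean, mrpow_eq_rpow hS, mrpow_eq_rpow hS, mrpow_eq_rpow hC, CFC.geomMean]

theorem fromBlocks_geomMean_posSemidef {S T : Matrix l l ℂ} (hS : S.PosDef)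
    (hT : T.PosSemidef) :
    (fromBlocks S (CFC.geomMean S T) (CFC.geomMean S T) T).PosSemidef := by
  have hG : (CFC.geomMean S T).IsHermitian := (CFC.geomMean_nonneg S T).posSemidef.1
  have := hS.isUnit.invertible
  nth_rw 2 [← hG.eq]
  rw [hS.fromBlocks₁₁, hG.eq, nonsing_inv_eq_ringInverse,
    CFC.geomMean_mul_ringInverse_mul_geomMean hS.isStrictlyPositive hT.nonneg, sub_self]
  exact .zero

theorem le_geomMean_of_fromBlocks_posSemidef {S T X : Matrix l l ℂ} (hS : S.PosDef)
    (hX : X.IsHermitian) (h : (fromBlocks S X X T).PosSemidef) : X ≤ CFC.geomMean S T := by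
  have := hS.isUnit.invertible
  nth_rw 2 [← hX.eq] at h
  rw [hS.fromBlocks₁₁, hX.eq, nonsing_inv_eq_ringInverse] at h
  exact CFC.le_geomMean hS.isStrictlyPositive hX (sub_nonneg.mp h.nonneg)

theorem sum_geomMean_le_geomMean_sum {ι : Type*} (s : Finset ι) {A B : ι → Matrix l l ℂ}
    (hA : ∀ i ∈ s, (A i).PosDef) (hB : ∀ i ∈ s, (B i).PosSemidef) :
    ∑ i ∈ s, CFC.geomMean (A i) (B i) ≤ CFC.geomMean (∑ i ∈ s, A i) (∑ i ∈ s, B i) := by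
  rcases s.eq_empty_or_nonempty with rfl | hs
  · simpa using CFC.geomMean_nonneg 0 0
  refine le_geomMean_of_fromBlocks_posSemidef (posDef_sum hs hA)
    (isSelfAdjoint_sum s fun i _ => .of_nonneg (CFC.geomMean_nonneg _ _)) ?_
  rw [fromBlocks_sum]
  exact posSemidef_sum s fun i hi => fromBlocks_geomMean_posSemidef (hA i hi) (hB i hi)

end

theorem gmean_superadditive {l : Type*} [Fintype l] [DecidableEq l] (m : ℕ)
    (A B : Fin m → Matrix l l ℂ) (hA : ∀ j, (A j).PosDef) (hB : ∀ j, (B j).PosDef) :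
    loewnerLE (∑ j, wgmean (A j) (B j) (1/2)) (wgmean (∑ j, A j) (∑ j, B j) (1/2)) := by
  have hsum : ∀ C : Fin m → Matrix l l ℂ, (∀ j, (C j).PosDef) → (∑ j, C j).PosSemidef :=
    fun C hC => posSemidef_sum _ fun j _ => (hC j).posSemidef
  rw [loewnerLE, ← Matrix.le_iff, wgmean_half_eq_geomMean (hsum A hA) (hsum B hB)]
  simp only [fun j => wgmean_half_eq_geomMean (hA j).posSemidef (hB j).posSemidef]
  exact sum_geomMean_le_geomMean_sum _ (fun j _ => hA j) (fun j _ => (hB j).posSemidef)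
end

section
/- For positive definite matrices A, B ∈ M_n(ℂ) and 1/2 ≤ s ≤ t ≤ 1, one has A^s ⊗ B^(1-s) + A^(1-s) ⊗ B^s ≤ A^t ⊗ B^(1-t) + A^(1-t) ⊗ B^t in the Loewner order; in particular the function g(t) = A^t ⊗ B^(1-t) + A^(1-t) ⊗ B^t attains its minimum on [0,1] at t = 1/2. -/
open Matrix Finset
open scoped ComplexOrder

/-! Diagonalising `A = U diag(λ) U*` and `B = V diag(μ) V*` turns every `A^r ⊗ B^r'` into
`(U ⊗ V) diag(λᵢ^r μⱼ^r') (U ⊗ V)*`, so the Loewner inequality reduces to the scalar one for every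
pair of eigenvalues `a, b > 0`. For `h(t) = a^t b^(1-t) + a^(1-t) b^t` one has
`h(t) - h(s) = (ab)^(1-t) (a^(t-s) - b^(t-s)) (a^(s+t-1) - b^(s+t-1))`,
and the last two factors have the same sign as soon as `s ≤ t` and `1 ≤ s + t`.
The minimum at `1/2` then follows from the symmetry `t ↦ 1 - t`. -/

/-- Twice the Heinz mean of `a` and `b`. -/
noncomputable def heinz (a b t : ℝ) : ℝ := a ^ t * b ^ (1 - t) + a ^ (1 - t) * b ^ t

theorem rpow_sub_rpow_mul_rpow_sub_rpow_nonneg {a b p q : ℝ} (ha : 0 ≤ a) (hb : 0 ≤ b)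
    (hp : 0 ≤ p) (hq : 0 ≤ q) : 0 ≤ (a ^ p - b ^ p) * (a ^ q - b ^ q) := by
  rcases le_total a b with hab | hba
  · exact mul_nonneg_of_nonpos_of_nonpos
      (sub_nonpos.2 (Real.rpow_le_rpow ha hab hp)) (sub_nonpos.2 (Real.rpow_le_rpow ha hab hq))
  · exact mul_nonneg
      (sub_nonneg.2 (Real.rpow_le_rpow hb hba hp)) (sub_nonneg.2 (Real.rpow_le_rpow hb hba hq))

theorem heinz_sub_heinz {a b : ℝ} (ha : 0 < a) (hb : 0 < b) (s t : ℝ) :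
    heinz a b t - heinz a b s =
      (a * b) ^ (1 - t) * ((a ^ (t - s) - b ^ (t - s)) * (a ^ (s + t - 1) - b ^ (s + t - 1))) := by
  have split : ∀ {c : ℝ}, 0 < c → ∀ x y z : ℝ, x + y = z → c ^ z = c ^ x * c ^ y :=
    fun hc x y z h => h ▸ Real.rpow_add hc x y
  -- write every power in terms of the exponents `1 - t`, `t - s` and `s + t - 1`
  rw [heinz, heinz, Real.mul_rpow ha.le hb.le,
    split ha (1 - t) (s + t - 1) s (by ring), split ha (1 - t) (t - s) (1 - s) (by ring),
    split ha (1 - s) (s + t - 1) t (by ring), split ha (1 - t) (t - s) (1 - s) (by ring),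
    split hb (1 - t) (s + t - 1) s (by ring), split hb (1 - t) (t - s) (1 - s) (by ring),
    split hb (1 - s) (s + t - 1) t (by ring), split hb (1 - t) (t - s) (1 - s) (by ring)]
  ring

theorem heinz_le_heinz {a b s t : ℝ} (ha : 0 < a) (hb : 0 < b) (hs : 1 / 2 ≤ s) (hst : s ≤ t) :
    heinz a b s ≤ heinz a b t := by
  refine sub_nonneg.1 (heinz_sub_heinz ha hb s t ▸ mul_nonneg (by positivity) ?_)
  exact rpow_sub_rpow_mul_rpow_sub_rpow_nonneg ha.le hb.le (by linarith) (by linarith)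

section

open Kronecker

variable {l : Type*} [Fintype l] [DecidableEq l]

theorem mrpow_of_isHermitian {A : Matrix l l ℂ} (hA : A.IsHermitian) (r : ℝ) :
    mrpow A r = (hA.eigenvectorUnitary : Matrix l l ℂ) *
      diagonal (fun i => ((hA.eigenvalues i ^ r : ℝ) : ℂ)) *
      (hA.eigenvectorUnitary : Matrix l l ℂ)ᴴ :=
  dif_pos hA

theorem mrpow_kronecker_mrpow {A B : Matrix l l ℂ} (hA : A.IsHermitian) (hB : B.IsHermitian)
    (r r' : ℝ) :
    mrpow A r ⊗ₖ mrpow B r' =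
      ((hA.eigenvectorUnitary : Matrix l l ℂ) ⊗ₖ (hB.eigenvectorUnitary : Matrix l l ℂ)) *
        diagonal (fun p : l × l => ((hA.eigenvalues p.1 ^ r * hB.eigenvalues p.2 ^ r' : ℝ) : ℂ)) *
        ((hA.eigenvectorUnitary : Matrix l l ℂ) ⊗ₖ (hB.eigenvectorUnitary : Matrix l l ℂ))ᴴ := by
  rw [mrpow_of_isHermitian hA, mrpow_of_isHermitian hB, mul_kronecker_mul, mul_kronecker_mul,
    diagonal_kronecker_diagonal, conjTranspose_kronecker]
  push_cast
  rfl

theorem loewnerLE_conj_diagonal {m : Type*} [Fintype m] [DecidableEq m] (W : Matrix l m ℂ)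
    {d e : m → ℝ} (hde : ∀ i, d i ≤ e i) :
    loewnerLE (W * diagonal (fun i => (d i : ℂ)) * Wᴴ) (W * diagonal (fun i => (e i : ℂ)) * Wᴴ) := by
  rw [loewnerLE, ← Matrix.sub_mul, ← Matrix.mul_sub, diagonal_sub]
  refine PosSemidef.mul_mul_conjTranspose_same (posSemidef_diagonal_iff.2 fun i => ?_) W
  simpa [← Complex.ofReal_sub] using hde i

noncomputable def tensorHeinz (A B : Matrix l l ℂ) (t : ℝ) : Matrix (l × l) (l × l) ℂ :=
  mrpow A t ⊗ₖ mrpow B (1 - t) + mrpow A (1 - t) ⊗ₖ mrpow B t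

theorem tensorHeinz_eq_conj_diagonal {A B : Matrix l l ℂ} (hA : A.IsHermitian)
    (hB : B.IsHermitian) (t : ℝ) :
    tensorHeinz A B t =
      ((hA.eigenvectorUnitary : Matrix l l ℂ) ⊗ₖ (hB.eigenvectorUnitary : Matrix l l ℂ)) *
        diagonal (fun p : l × l => (heinz (hA.eigenvalues p.1) (hB.eigenvalues p.2) t : ℂ)) *
        ((hA.eigenvectorUnitary : Matrix l l ℂ) ⊗ₖ (hB.eigenvectorUnitary : Matrix l l ℂ))ᴴ := by
  rw [tensorHeinz, mrpow_kronecker_mrpow hA hB, mrpow_kronecker_mrpow hA hB, ← Matrix.add_mul,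
    ← Matrix.mul_add, diagonal_add]
  simp only [heinz, Complex.ofReal_add]

theorem tensorHeinz_mono {A B : Matrix l l ℂ} (hA : A.PosDef) (hB : B.PosDef) {s t : ℝ}
    (hs : 1 / 2 ≤ s) (hst : s ≤ t) : loewnerLE (tensorHeinz A B s) (tensorHeinz A B t) := by
  rw [tensorHeinz_eq_conj_diagonal hA.isHermitian hB.isHermitian,
    tensorHeinz_eq_conj_diagonal hA.isHermitian hB.isHermitian]
  exact loewnerLE_conj_diagonal _ fun p =>
    heinz_le_heinz (hA.eigenvalues_pos p.1) (hB.eigenvalues_pos p.2) hs hst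

theorem tensorHeinz_one_sub (A B : Matrix l l ℂ) (t : ℝ) :
    tensorHeinz A B (1 - t) = tensorHeinz A B t := by
  rw [tensorHeinz, tensorHeinz, sub_sub_cancel, add_comm]

theorem tensorHeinz_half_le {A B : Matrix l l ℂ} (hA : A.PosDef) (hB : B.PosDef) (u : ℝ) :
    loewnerLE (tensorHeinz A B (1 / 2)) (tensorHeinz A B u) := by
  rcases le_total (1 / 2) u with hu | hu
  · exact tensorHeinz_mono hA hB le_rfl hu
  · rw [← tensorHeinz_one_sub A B u]
    exact tensorHeinz_mono hA hB le_rfl (by linarith)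

end

open Kronecker in
theorem tensor_monotone_half_general {l : Type*} [Fintype l] [DecidableEq l]
    {A B : Matrix l l ℂ} (hA : A.PosDef) (hB : B.PosDef)
    (s t : ℝ) (hs : 1/2 ≤ s) (hst : s ≤ t) :
    loewnerLE (mrpow A s ⊗ₖ mrpow B (1 - s) + mrpow A (1 - s) ⊗ₖ mrpow B s)
        (mrpow A t ⊗ₖ mrpow B (1 - t) + mrpow A (1 - t) ⊗ₖ mrpow B t) ∧
      ∀ u : ℝ, 0 ≤ u → u ≤ 1 →
        loewnerLE (mrpow A (1/2 : ℝ) ⊗ₖ mrpow B (1/2 : ℝ) + mrpow A (1/2 : ℝ) ⊗ₖ mrpow B (1/2 : ℝ))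
          (mrpow A u ⊗ₖ mrpow B (1 - u) + mrpow A (1 - u) ⊗ₖ mrpow B u) := by
  refine ⟨tensorHeinz_mono hA hB hs hst, fun u _ _ => ?_⟩
  have h := tensorHeinz_half_le hA hB u
  rwa [tensorHeinz, show (1 : ℝ) - 1 / 2 = 1 / 2 by norm_num] at h

open Kronecker in
theorem tensor_monotone_half {l : Type*} [Fintype l] [DecidableEq l]
    {A B : Matrix l l ℂ} (hA : A.PosDef) (hB : B.PosDef)
    (s t : ℝ) (hs : 1/2 ≤ s) (hst : s ≤ t) (ht : t ≤ 1) :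
    loewnerLE (mrpow A s ⊗ₖ mrpow B (1 - s) + mrpow A (1 - s) ⊗ₖ mrpow B s)
        (mrpow A t ⊗ₖ mrpow B (1 - t) + mrpow A (1 - t) ⊗ₖ mrpow B t) ∧
      ∀ u : ℝ, 0 ≤ u → u ≤ 1 →
        loewnerLE (mrpow A (1/2 : ℝ) ⊗ₖ mrpow B (1/2 : ℝ) + mrpow A (1/2 : ℝ) ⊗ₖ mrpow B (1/2 : ℝ))
          (mrpow A u ⊗ₖ mrpow B (1 - u) + mrpow A (1 - u) ⊗ₖ mrpow B u) :=
  tensor_monotone_half_general hA hB s t hs hst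
end

section
/- For positive definite matrices A_1,...,A_m ∈ M_n(ℂ) and t ∈ [0,1], one has ((1/m)∑_j A_j^(1/2)) ∘ ((1/m)∑_j A_j^(1/2)) ≤ ((1/m)∑_j A_j^t) ∘ ((1/m)∑_j A_j^(1-t)) ≤ (1/m)∑_j (A_j ∘ I_n) in the Loewner order. -/
open Matrix Finset
open scoped ComplexOrder

/-!
If `A = ∑ᵢ λᵢ uᵢ uᵢᴴ` and `B = ∑ⱼ μⱼ vⱼ vⱼᴴ`, then `f(A) ⊙ g(B) = ∑ᵢⱼ f(λᵢ) g(μⱼ) wᵢⱼ wᵢⱼᴴ` with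
`wᵢⱼ = uᵢ ∘ vⱼ`. Hence a scalar inequality between sums of products `f(x) g(y)`, valid for all
`x, y > 0`, lifts to a Loewner inequality between the corresponding sums of Hadamard products of
positive definite matrices. Expanding the means of the theorem into double sums over pairs `(j, k)`,
the first inequality reduces, after symmetrizing in `j, k`, to
`2 √(xy) ≤ x^t y^(1-t) + x^(1-t) y^t`, and the second to the weighted AM-GM inequality
`x^t y^(1-t) ≤ t x + (1-t) y`.
-/

namespace Matrix

lemma smul_sum_hadamard_smul_sum {ι l n α : Type*} [Fintype ι] [CommSemiring α] (c : α)
    (M N : ι → Matrix l n α) :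
    (c • ∑ j, M j) ⊙ (c • ∑ k, N k) = (c * c) • ∑ j, ∑ k, M j ⊙ N k := by
  rw [smul_hadamard, hadamard_smul, smul_smul]
  congr 1
  ext p q
  simp only [hadamard_apply, sum_apply, sum_mul_sum]

variable {l n n' 𝕜 : Type*} [Fintype n] [Fintype n'] [DecidableEq n] [DecidableEq n'] [RCLike 𝕜]

lemma conj_diagonal_hadamard_conj_diagonal (U : Matrix l n 𝕜) (V : Matrix l n' 𝕜)
    (f : n → ℝ) (g : n' → ℝ) :
    (U * diagonal (fun i => (f i : 𝕜)) * Uᴴ) ⊙ (V * diagonal (fun j => (g j : 𝕜)) * Vᴴ) =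
      ∑ i, ∑ j, (f i * g j) • vecMulVec (Uᵀ i * Vᵀ j) (star (Uᵀ i * Vᵀ j)) := by
  ext p q
  simp only [hadamard_apply, mul_apply, diagonal_apply, mul_ite, mul_zero, Finset.sum_ite_eq',
    Finset.mem_univ, if_true, conjTranspose_apply, sum_apply, smul_apply, vecMulVec_apply,
    Pi.star_apply, Pi.mul_apply, transpose_apply, star_mul', RCLike.real_smul_eq_coe_smul (K := 𝕜),
    smul_eq_mul, Finset.sum_mul_sum, RCLike.ofReal_mul]
  exact Finset.sum_congr rfl fun i _ => Finset.sum_congr rfl fun j _ => by ring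

namespace IsHermitian

variable {A B : Matrix n n 𝕜}

/-- The functional calculus of the pair `(A, B)` for the Hadamard product:
`φ ↦ ∑ᵢⱼ φ(λᵢ, μⱼ) wᵢⱼ wᵢⱼᴴ`, where `wᵢⱼ = Uᵀ i * Vᵀ j` is the entrywise product of the `i`-th
eigenvector of `A` and the `j`-th eigenvector of `B`. -/
noncomputable def hadamardCfc (hA : A.IsHermitian) (hB : B.IsHermitian) :
    (ℝ → ℝ → ℝ) →ₗ[ℝ] Matrix n n 𝕜 where
  toFun φ :=
    let U : Matrix n n 𝕜 := hA.eigenvectorUnitary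
    let V : Matrix n n 𝕜 := hB.eigenvectorUnitary
    ∑ i, ∑ j, φ (hA.eigenvalues i) (hB.eigenvalues j) • vecMulVec (Uᵀ i * Vᵀ j) (star (Uᵀ i * Vᵀ j))
  map_add' φ ψ := by simp only [Pi.add_apply, add_smul, Finset.sum_add_distrib]
  map_smul' c φ := by
    simp only [Pi.smul_apply, smul_eq_mul, mul_smul, Finset.smul_sum, RingHom.id_apply]

lemma cfc_hadamard_cfc (hA : A.IsHermitian) (hB : B.IsHermitian) (f g : ℝ → ℝ) :
    cfc f A ⊙ cfc g B = hA.hadamardCfc hB (fun x y => f x * g y) := by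
  rw [hA.cfc_eq, hB.cfc_eq, IsHermitian.cfc, IsHermitian.cfc, Unitary.conjStarAlgAut_apply,
    Unitary.conjStarAlgAut_apply, star_eq_conjTranspose, star_eq_conjTranspose]
  exact conj_diagonal_hadamard_conj_diagonal _ _ (f ∘ hA.eigenvalues) (g ∘ hB.eigenvalues)

lemma posSemidef_hadamardCfc (hA : A.IsHermitian) (hB : B.IsHermitian) {φ : ℝ → ℝ → ℝ}
    (hφ : ∀ i j, 0 ≤ φ (hA.eigenvalues i) (hB.eigenvalues j)) :
    (hA.hadamardCfc hB φ).PosSemidef :=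
  posSemidef_sum _ fun i _ => posSemidef_sum _ fun j _ =>
    (posSemidef_vecMulVec_self_star _).smul (hφ i j)

end IsHermitian

lemma PosDef.posSemidef_hadamardCfc {A B : Matrix n n 𝕜} (hA : A.PosDef) (hB : B.PosDef)
    {φ : ℝ → ℝ → ℝ} (hφ : ∀ x > 0, ∀ y > 0, 0 ≤ φ x y) :
    (hA.isHermitian.hadamardCfc hB.isHermitian φ).PosSemidef :=
  hA.isHermitian.posSemidef_hadamardCfc _ fun i j =>
    hφ _ (hA.eigenvalues_pos i) _ (hB.eigenvalues_pos j)

end Matrix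

lemma Real.two_mul_geom_mean_le_heinz {x y : ℝ} (hx : 0 < x) (hy : 0 < y) (t : ℝ) :
    2 * (x ^ (1 / 2 : ℝ) * y ^ (1 / 2 : ℝ)) ≤ x ^ t * y ^ (1 - t) + x ^ (1 - t) * y ^ t := by
  have hprod : (x ^ t * y ^ (1 - t)) * (x ^ (1 - t) * y ^ t) = x * y := by
    rw [mul_mul_mul_comm, ← rpow_add hx, mul_comm (y ^ (1 - t)), ← rpow_add hy]
    simp
  have hsq : (x ^ (1 / 2 : ℝ) * y ^ (1 / 2 : ℝ)) ^ 2 = x * y := by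
    rw [← sqrt_eq_rpow, ← sqrt_eq_rpow, mul_pow, sq_sqrt hx.le, sq_sqrt hy.le]
  have ha : 0 ≤ x ^ t * y ^ (1 - t) := by positivity
  have hb : 0 ≤ x ^ (1 - t) * y ^ t := by positivity
  have hs : 0 ≤ x ^ (1 / 2 : ℝ) * y ^ (1 / 2 : ℝ) := by positivity
  nlinarith [sq_nonneg (x ^ t * y ^ (1 - t) - x ^ (1 - t) * y ^ t)]

section Average

variable {ι E : Type*} [Fintype ι] [AddCommGroup E] [Module ℝ E]

lemma sum_sum_smul_add_one_sub_smul (D : ι → E) (t : ℝ) :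
    ∑ j, ∑ k, (t • D j + (1 - t) • D k) = Fintype.card ι • ∑ j, D j := by
  simp only [sum_add_distrib, sum_const, card_univ, ← smul_sum]
  module

lemma inv_card_smul_sum_eq_inv_card_sq_smul_sum_sum [Module ℂ E] (D : ι → E) (t : ℝ) :
    (Fintype.card ι : ℂ)⁻¹ • ∑ j, D j =
      ((Fintype.card ι : ℂ)⁻¹ * (Fintype.card ι : ℂ)⁻¹) • ∑ j, ∑ k, (t • D j + (1 - t) • D k) := by
  rw [sum_sum_smul_add_one_sub_smul, ← Nat.cast_smul_eq_nsmul ℂ, smul_smul]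
  congr 1
  simpa using (mul_self_mul_inv (Fintype.card ι : ℂ)⁻¹).symm

end Average

section Loewner

variable {l : Type*} [Fintype l] [DecidableEq l]

lemma mrpow_eq_cfc {A : Matrix l l ℂ} (hA : A.IsHermitian) (r : ℝ) :
    mrpow A r = cfc (fun x : ℝ => x ^ r) A := by
  rw [mrpow, dif_pos hA, hA.cfc_eq, IsHermitian.cfc, Unitary.conjStarAlgAut_apply]
  rfl

lemma loewnerLE.smul {X Y : Matrix l l ℂ} (h : loewnerLE X Y) {c : ℂ} (hc : 0 ≤ c) :
    loewnerLE (c • X) (c • Y) := by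
  unfold loewnerLE at *
  rw [← smul_sub]
  exact h.smul hc

lemma loewnerLE_sum {ι : Type*} {s : Finset ι} {X Y : ι → Matrix l l ℂ}
    (h : ∀ i ∈ s, loewnerLE (X i) (Y i)) : loewnerLE (∑ i ∈ s, X i) (∑ i ∈ s, Y i) := by
  unfold loewnerLE
  rw [← sum_sub_distrib]
  exact posSemidef_sum s h

lemma loewnerLE_sum_sum_of_symm {ι : Type*} [Fintype ι] {X Y : ι → ι → Matrix l l ℂ}
    (h : ∀ j k, loewnerLE (X j k + X k j) (Y j k + Y k j)) :
    loewnerLE (∑ j, ∑ k, X j k) (∑ j, ∑ k, Y j k) := by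
  have h2 := (loewnerLE_sum (s := univ) fun j _ => loewnerLE_sum (s := univ) fun k _ => h j k).smul
    (show (0 : ℂ) ≤ 2⁻¹ by positivity)
  simp only [sum_add_distrib] at h2
  rwa [sum_comm (f := fun j k => X k j), sum_comm (f := fun j k => Y k j), ← two_smul ℂ,
    ← two_smul ℂ (∑ j, ∑ k, Y j k), inv_smul_smul₀ two_ne_zero, inv_smul_smul₀ two_ne_zero] at h2

lemma hadamard_geomMean_loewnerLE_heinz {A B : Matrix l l ℂ} (hA : A.PosDef) (hB : B.PosDef)
    (t : ℝ) :
    loewnerLE (mrpow A (1 / 2) ⊙ mrpow B (1 / 2) + mrpow B (1 / 2) ⊙ mrpow A (1 / 2))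
      (mrpow A t ⊙ mrpow B (1 - t) + mrpow B t ⊙ mrpow A (1 - t)) := by
  unfold loewnerLE
  rw [hadamard_comm (mrpow B (1 / 2)), hadamard_comm (mrpow B t)]
  simp only [mrpow_eq_cfc hA.isHermitian, mrpow_eq_cfc hB.isHermitian,
    hA.isHermitian.cfc_hadamard_cfc hB.isHermitian, ← map_add, ← map_sub]
  refine hA.posSemidef_hadamardCfc hB fun x hx y hy => ?_
  simp only [Pi.add_apply, Pi.sub_apply, sub_nonneg]
  linarith [Real.two_mul_geom_mean_le_heinz hx hy t]

lemma hadamard_mrpow_loewnerLE_arithMean {A B : Matrix l l ℂ} (hA : A.PosDef) (hB : B.PosDef)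
    {t : ℝ} (ht0 : 0 ≤ t) (ht1 : t ≤ 1) :
    loewnerLE (mrpow A t ⊙ mrpow B (1 - t)) (t • (A ⊙ 1) + (1 - t) • (B ⊙ 1)) := by
  have hA1 : A ⊙ 1 = hA.isHermitian.hadamardCfc hB.isHermitian (fun x _ => x * 1) := by
    rw [← hA.isHermitian.cfc_hadamard_cfc hB.isHermitian (fun x => x) (fun _ => 1),
      cfc_id' ℝ A hA.isHermitian.isSelfAdjoint, cfc_const_one ℝ B hB.isHermitian.isSelfAdjoint]
  have hB1 : B ⊙ 1 = hA.isHermitian.hadamardCfc hB.isHermitian (fun _ y => 1 * y) := by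
    rw [hadamard_comm, ← hA.isHermitian.cfc_hadamard_cfc hB.isHermitian (fun _ => 1) (fun y => y),
      cfc_id' ℝ B hB.isHermitian.isSelfAdjoint, cfc_const_one ℝ A hA.isHermitian.isSelfAdjoint]
  unfold loewnerLE
  rw [hA1, hB1, mrpow_eq_cfc hA.isHermitian, mrpow_eq_cfc hB.isHermitian,
    hA.isHermitian.cfc_hadamard_cfc hB.isHermitian, ← map_smul, ← map_smul, ← map_add, ← map_sub]
  refine hA.posSemidef_hadamardCfc hB fun x hx y hy => ?_
  simp only [Pi.add_apply, Pi.sub_apply, Pi.smul_apply, smul_eq_mul, mul_one, one_mul, sub_nonneg]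
  exact Real.geom_mean_le_arith_mean2_weighted ht0 (by linarith) hx.le hy.le (by ring)

end Loewner

theorem hadamard_power_mean {l : Type*} [Fintype l] [DecidableEq l] (m : ℕ)
    (A : Fin m → Matrix l l ℂ) (hA : ∀ j, (A j).PosDef)
    (t : ℝ) (ht0 : 0 ≤ t) (ht1 : t ≤ 1) :
    loewnerLE (((m : ℂ)⁻¹ • ∑ j, mrpow (A j) (1/2)) ⊙ ((m : ℂ)⁻¹ • ∑ j, mrpow (A j) (1/2)))
        (((m : ℂ)⁻¹ • ∑ j, mrpow (A j) t) ⊙ ((m : ℂ)⁻¹ • ∑ j, mrpow (A j) (1 - t))) ∧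
      loewnerLE (((m : ℂ)⁻¹ • ∑ j, mrpow (A j) t) ⊙ ((m : ℂ)⁻¹ • ∑ j, mrpow (A j) (1 - t)))
        ((m : ℂ)⁻¹ • ∑ j, (A j ⊙ (1 : Matrix l l ℂ))) := by
  have hc : (0 : ℂ) ≤ (m : ℂ)⁻¹ * (m : ℂ)⁻¹ := by positivity
  have hmean : (m : ℂ)⁻¹ • ∑ j, (A j ⊙ 1) =
      ((m : ℂ)⁻¹ * (m : ℂ)⁻¹) • ∑ j, ∑ k, (t • (A j ⊙ 1) + (1 - t) • (A k ⊙ 1)) := by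
    simpa only [Fintype.card_fin] using
      inv_card_smul_sum_eq_inv_card_sq_smul_sum_sum (fun j => A j ⊙ 1) t
  simp only [Matrix.smul_sum_hadamard_smul_sum]
  refine ⟨?_, hmean ▸ ?_⟩
  · exact (loewnerLE_sum_sum_of_symm fun j k =>
      hadamard_geomMean_loewnerLE_heinz (hA j) (hA k) t).smul hc
  · exact (loewnerLE_sum fun j _ => loewnerLE_sum fun k _ =>
      hadamard_mrpow_loewnerLE_arithMean (hA j) (hA k) ht0 ht1).smul hc
end
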